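/- Fix λ ∈ ℝ^n and an index i. Let F^1, …, F^n and G^i be continuous CDFs on [0, x̄] with sup_x |F^i(x) − G^i(x)| ≤ Δ, and let F = F^1 ⊗ … ⊗ F^n and G be the product distribution obtained from F by replacing the i-th marginal F^i with G^i. Then Σ_j ( p_j(F, λ) − p_j(G, λ) )^+ = Σ_j ( p_j(G, λ) − p_j(F, λ) )^+ ≤ Δ, where (a)^+ = max(a, 0). -/

import Mathlib

open MeasureTheory ProbabilityTheory Real

noncomputable section

/-- CDF of a measure on `ℝ`. -/
def mcdf (μ : Measure ℝ) (x : ℝ) : ℝ := (μ (Set.Iic x)).toReal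

/-- The Laguerre cell `L_i(λ) = {x ∈ [0,x̄]^n : x_i + λ_i > x_j + λ_j ∀ j ≠ i}`. -/
def laguerre {n : ℕ} (xbar : ℝ) (lam : Fin n → ℝ) (i : Fin n) : Set (Fin n → ℝ) :=
  {x | (∀ j, x j ∈ Set.Icc (0 : ℝ) xbar) ∧ ∀ j, j ≠ i → x j + lam j < x i + lam i}

/-- `p_j(𝐅, λ) = P_{X∼𝐅}(X ∈ L_j(λ))`. -/
def pAlloc {n : ℕ} (xbar : ℝ) (μ : Measure (Fin n → ℝ)) (lam : Fin n → ℝ) (j : Fin n) : ℝ :=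
  (μ (laguerre xbar lam j)).toReal

/-!
Fubini over the `i`-th coordinate reduces the bound to one dimension. Once the other coordinates
are fixed, the winner is the best rival `j₀` while `xᵢ + λᵢ` is below the rival's bid and `i` once
it is above, so the section of any union of Laguerre cells is, inside `[0, x̄]`, a union of some of
the two pieces `{t < c}` and `{t > c}` for a single threshold `c`. Its `Fⁱ`- and `Gⁱ`-masses thus
differ by `0` or `±(Fⁱ(c) − Gⁱ(c))`, and the sum of positive parts is the integral of these
differences for the union of the cells where `F` allocates more. Ties have probability zero, so
both allocation vectors sum to one, which gives the equality of the two sums.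
-/

open Set Function
open scoped ENNReal

section ThresholdSet

variable {α : Type*} [LinearOrder α] {K : Set α} {c : α}

def IsThresholdSet (K : Set α) (c : α) (s : Set α) : Prop :=
  (K ∩ Iio c ⊆ s ∨ Disjoint s (Iio c)) ∧ (K ∩ Ioi c ⊆ s ∨ Disjoint s (Ioi c))

lemma IsThresholdSet.biUnion {ι : Type*} {S : Set ι}
    {s : ι → Set α} (hs : ∀ j ∈ S, IsThresholdSet K c (s j)) :
    IsThresholdSet K c (⋃ j ∈ S, s j) := by
  have key : ∀ T : Set α, (∀ j ∈ S, K ∩ T ⊆ s j ∨ Disjoint (s j) T) →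
      K ∩ T ⊆ ⋃ j ∈ S, s j ∨ Disjoint (⋃ j ∈ S, s j) T := by
    intro T hT
    by_cases h : ∃ j ∈ S, K ∩ T ⊆ s j
    · obtain ⟨j, hj, hsub⟩ := h
      exact Or.inl (hsub.trans (subset_biUnion_of_mem hj))
    · simp only [not_exists, not_and] at h
      exact Or.inr (disjoint_iUnion₂_left.mpr fun j hj => (hT j hj).resolve_left (h j hj))
  exact ⟨key _ fun j hj => (hs j hj).1, key _ fun j hj => (hs j hj).2⟩

lemma isThresholdSet_empty : IsThresholdSet K c ∅ :=
  ⟨Or.inr (empty_disjoint _), Or.inr (empty_disjoint _)⟩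

lemma isThresholdSet_self : IsThresholdSet K c K :=
  ⟨Or.inl inter_subset_left, Or.inl inter_subset_left⟩

lemma isThresholdSet_inter_Iio : IsThresholdSet K c (K ∩ Iio c) :=
  ⟨Or.inl subset_rfl, Or.inr (disjoint_left.mpr fun _ h₁ h₂ => (h₁.2.trans h₂).false)⟩

lemma isThresholdSet_inter_Ioi : IsThresholdSet K c (K ∩ Ioi c) :=
  ⟨Or.inr (disjoint_left.mpr fun _ h₁ h₂ => (h₁.2.trans h₂).false), Or.inl subset_rfl⟩

end ThresholdSet

lemma mcdf_eq_cdf (μ : Measure ℝ) [IsProbabilityMeasure μ] : mcdf μ = cdf μ :=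
  funext fun x => (cdf_eq_real μ x).symm

lemma nullSingletonClass_of_continuous_mcdf {μ : Measure ℝ} [IsProbabilityMeasure μ]
    (h : Continuous (mcdf μ)) : NullSingletonClass μ := by
  refine ⟨fun a => ?_⟩
  rw [mcdf_eq_cdf] at h
  rw [← measure_cdf μ, StieltjesFunction.measure_singleton, h.continuousWithinAt.leftLim_eq,
    sub_self, ENNReal.ofReal_zero]

lemma measureReal_Iio_eq_mcdf {μ : Measure ℝ} [NullSingletonClass μ] (c : ℝ) :
    μ.real (Iio c) = mcdf μ c :=
  measureReal_congr Iio_ae_eq_Iic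

lemma measureReal_Ioi_eq_one_sub_mcdf {μ : Measure ℝ} [IsProbabilityMeasure μ] (c : ℝ) :
    μ.real (Ioi c) = 1 - mcdf μ c := by
  rw [← compl_Iic, probReal_compl_eq_one_sub measurableSet_Iic, measureReal_def, mcdf]

lemma measure_inter_eq_of_inter_subset {α : Type*} [MeasurableSpace α] {ρ : Measure α}
    [IsProbabilityMeasure ρ] {K T s : Set α} (hK : MeasurableSet K) (hρK : ρ K = 1)
    (h : K ∩ T ⊆ s) : ρ (s ∩ T) = ρ T :=
  le_antisymm (measure_mono inter_subset_right) <| calc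
    ρ T = ρ (T ∩ K) := (measure_inter_conull ((prob_compl_eq_zero_iff hK).mpr hρK)).symm
    _ ≤ ρ (s ∩ T) := measure_mono fun _ ht => ⟨h ⟨ht.2, ht.1⟩, ht.1⟩

lemma measureReal_le_add_of_isThresholdSet {μ ν : Measure ℝ} [IsProbabilityMeasure μ]
    [IsProbabilityMeasure ν] [NullSingletonClass μ] [NullSingletonClass ν] {K s : Set ℝ} {c Δ : ℝ}
    (hK : MeasurableSet K) (hμK : μ K = 1) (hνK : ν K = 1) (hs : MeasurableSet s)
    (hsc : IsThresholdSet K c s) (hclose : |mcdf μ c - mcdf ν c| ≤ Δ) :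
    μ.real s ≤ ν.real s + Δ := by
  have split : ∀ (ρ : Measure ℝ) [IsProbabilityMeasure ρ] [NullSingletonClass ρ],
      ρ.real s = ρ.real (s ∩ Iio c) + ρ.real (s ∩ Ioi c) := by
    intro ρ _ _
    have hdecomp : s ∩ Iio c ∪ s ∩ Ioi c = s \ {c} := by
      rw [← inter_union_distrib_left, Iio_union_Ioi, sdiff_eq_compl_inter, inter_comm]
    rw [← measureReal_union ?_ (hs.inter measurableSet_Ioi), hdecomp]
    · exact measureReal_congr (sdiff_null_ae_eq_self (measure_singleton c)).symm
    · exact Disjoint.mono inter_subset_right inter_subset_right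
        (disjoint_left.mpr fun t (h₁ : t < c) (h₂ : c < t) => (h₁.trans h₂).false)
  have full : ∀ (ρ : Measure ℝ) [IsProbabilityMeasure ρ] (T : Set ℝ), ρ K = 1 → K ∩ T ⊆ s →
      ρ.real (s ∩ T) = ρ.real T := fun ρ _ T hρK h => by
    rw [measureReal_def, measure_inter_eq_of_inter_subset hK hρK h, measureReal_def]
  have null : ∀ (ρ : Measure ℝ) (T : Set ℝ), Disjoint s T → ρ.real (s ∩ T) = 0 := fun ρ T h => by
    rw [disjoint_iff_inter_eq_empty.mp h, measureReal_empty]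
  rw [split μ, split ν]
  rcases hsc with ⟨hlo | hlo, hhi | hhi⟩ <;>
  simp only [full μ _ hμK, full ν _ hνK, null, hlo, hhi,
    measureReal_Iio_eq_mcdf, measureReal_Ioi_eq_one_sub_mcdf] <;>
  linarith [abs_le.mp hclose, abs_nonneg (mcdf μ c - mcdf ν c)]

section Fubini

variable {ι α : Type*} [Fintype ι] [DecidableEq ι] [MeasurableSpace α]

lemma measure_pi_eq_lmarginal_measure_update (μ : ι → Measure α) [∀ j, SigmaFinite (μ j)] (i : ι)
    {U : Set (ι → α)} (hU : MeasurableSet U) (x₀ : ι → α) :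
    Measure.pi μ U =
      (∫⋯∫⁻_(Finset.univ.erase i), (fun x => μ i {t | update x i t ∈ U}) ∂μ) x₀ := by
  rw [← lintegral_indicator_one hU, lintegral_eq_lmarginal_univ x₀,
    lmarginal_erase' _ (measurable_one.indicator hU) (Finset.mem_univ i)]
  congr! with x
  exact lintegral_indicator_one (measurable_update x hU)

lemma measure_pi_eq_zero_of_measure_update (μ : ι → Measure α) [∀ j, SigmaFinite (μ j)] (i : ι)
    {U : Set (ι → α)} (hU : MeasurableSet U) (h : ∀ x, μ i {t | update x i t ∈ U} = 0) :
    Measure.pi μ U = 0 := by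
  rcases U.eq_empty_or_nonempty with rfl | ⟨x₀, -⟩
  · exact measure_empty
  rw [measure_pi_eq_lmarginal_measure_update μ i hU x₀]
  simp only [h, lmarginal, lintegral_zero]

lemma measure_pi_le_add_of_measure_update_le {μ ν : ι → Measure α}
    [∀ j, IsProbabilityMeasure (μ j)] [∀ j, IsProbabilityMeasure (ν j)] {i : ι}
    (hνμ : ∀ j ≠ i, ν j = μ j) {U : Set (ι → α)} (hU : MeasurableSet U) {δ : ℝ≥0∞}
    (h : ∀ x, μ i {t | update x i t ∈ U} ≤ ν i {t | update x i t ∈ U} + δ) :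
    Measure.pi μ U ≤ Measure.pi ν U + δ := by
  rcases U.eq_empty_or_nonempty with rfl | ⟨x₀, -⟩
  · simp
  have hμν : (fun j : (Finset.univ.erase i : Finset ι) => μ j) =
      fun j : (Finset.univ.erase i : Finset ι) => ν j :=
    funext fun j => (hνμ j (Finset.ne_of_mem_erase j.2)).symm
  rw [measure_pi_eq_lmarginal_measure_update μ i hU x₀,
    measure_pi_eq_lmarginal_measure_update ν i hU x₀]
  calc (∫⋯∫⁻_(Finset.univ.erase i), (fun x => μ i {t | update x i t ∈ U}) ∂μ) x₀
      ≤ (∫⋯∫⁻_(Finset.univ.erase i), (fun x => ν i {t | update x i t ∈ U} + δ) ∂μ) x₀ :=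
        lmarginal_mono h x₀
    _ = (∫⋯∫⁻_(Finset.univ.erase i), (fun x => ν i {t | update x i t ∈ U}) ∂ν) x₀ + δ := by
        simp only [lmarginal, hμν]
        rw [lintegral_add_right _ measurable_const, lintegral_const, measure_univ, mul_one]

end Fubini

variable {n : ℕ} {xbar : ℝ} {lam : Fin n → ℝ}

lemma update_mem_laguerre_self_iff (i : Fin n) (x : Fin n → ℝ) (t : ℝ) :
    update x i t ∈ laguerre xbar lam i ↔
      (t ∈ Icc 0 xbar ∧ ∀ k ≠ i, x k ∈ Icc 0 xbar) ∧ ∀ k ≠ i, x k + lam k < t + lam i := by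
  rw [laguerre, mem_ofPred_eq, forall_update_iff x (fun _ v => v ∈ Icc 0 xbar), update_self]
  exact and_congr_right' (forall₂_congr fun k hk => by rw [update_of_ne hk])

lemma update_mem_laguerre_iff_of_ne {i j : Fin n} (hj : j ≠ i) (x : Fin n → ℝ) (t : ℝ) :
    update x i t ∈ laguerre xbar lam j ↔
      (t ∈ Icc 0 xbar ∧ ∀ k ≠ i, x k ∈ Icc 0 xbar) ∧ t + lam i < x j + lam j ∧
        ∀ k ≠ i, k ≠ j → x k + lam k < x j + lam j := by
  rw [laguerre, mem_ofPred_eq, forall_update_iff x (fun _ v => v ∈ Icc 0 xbar), update_of_ne hj]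
  refine and_congr_right' ⟨fun h => ⟨by simpa using h i hj.symm, fun k hki hkj => ?_⟩, ?_⟩
  · simpa [update_of_ne hki] using h k hkj
  · rintro ⟨hi, hk⟩ k hkj
    by_cases hki : k = i
    · subst hki; simpa using hi
    · simpa [update_of_ne hki] using hk k hki hkj

lemma forall_mem_Icc_of_update_mem_laguerre {i j : Fin n} {x : Fin n → ℝ} {t : ℝ}
    (h : update x i t ∈ laguerre xbar lam j) : ∀ k ≠ i, x k ∈ Icc 0 xbar := fun k hk => by
  simpa [update_of_ne hk] using h.1 k

section Sections

variable {i j₀ : Fin n} {x : Fin n → ℝ}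

lemma isThresholdSet_update_laguerre_self (hx : ∀ k ≠ i, x k ∈ Icc 0 xbar) (hj₀ : j₀ ≠ i)
    (hmax : ∀ k ≠ i, x k + lam k ≤ x j₀ + lam j₀) :
    IsThresholdSet (Icc 0 xbar) (x j₀ + lam j₀ - lam i)
      {t | update x i t ∈ laguerre xbar lam i} := by
  convert isThresholdSet_inter_Ioi using 1
  ext t
  rw [mem_ofPred_eq, update_mem_laguerre_self_iff, mem_inter_iff, mem_Ioi, sub_lt_iff_lt_add]
  exact ⟨fun ⟨⟨ht, _⟩, hwin⟩ => ⟨ht, hwin j₀ hj₀⟩,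
    fun ⟨ht, hct⟩ => ⟨⟨ht, hx⟩, fun k hk => (hmax k hk).trans_lt hct⟩⟩

lemma isThresholdSet_update_laguerre_of_ne (hx : ∀ k ≠ i, x k ∈ Icc 0 xbar) (hj₀ : j₀ ≠ i)
    (hmax : ∀ k ≠ i, x k + lam k ≤ x j₀ + lam j₀) {j : Fin n} (hj : j ≠ i) :
    IsThresholdSet (Icc 0 xbar) (x j₀ + lam j₀ - lam i)
      {t | update x i t ∈ laguerre xbar lam j} := by
  by_cases hwin : ∀ k ≠ i, k ≠ j → x k + lam k < x j + lam j
  · have hj_max : x j + lam j = x j₀ + lam j₀ := by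
      refine le_antisymm (hmax j hj) ?_
      rcases eq_or_ne j₀ j with rfl | hj₀j
      · exact le_rfl
      · exact (hwin j₀ hj₀ hj₀j).le
    convert isThresholdSet_inter_Iio using 1
    ext t
    rw [mem_ofPred_eq, update_mem_laguerre_iff_of_ne hj, mem_inter_iff, mem_Iio,
      lt_sub_iff_add_lt, hj_max]
    exact ⟨fun ⟨⟨ht, _⟩, htc, _⟩ => ⟨ht, htc⟩, fun ⟨ht, htc⟩ => ⟨⟨ht, hx⟩, htc, hj_max ▸ hwin⟩⟩
  · convert isThresholdSet_empty using 1
    exact eq_empty_of_forall_notMem fun t ht =>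
      hwin ((update_mem_laguerre_iff_of_ne hj x t).mp ht).2.2

end Sections

/-- The threshold is where coordinate `i` ties with the best of the other coordinates. -/
lemma exists_isThresholdSet_update_laguerre (i : Fin n) (x : Fin n → ℝ) :
    ∃ c, ∀ j, IsThresholdSet (Icc 0 xbar) c {t | update x i t ∈ laguerre xbar lam j} := by
  by_cases hrival : ∃ k, k ≠ i
  · obtain ⟨⟨j₀, hj₀⟩, hmax⟩ := @Finite.exists_max {k // k ≠ i} _ _
      (let ⟨k, hk⟩ := hrival; ⟨⟨k, hk⟩⟩) _ (fun k => x k + lam k)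
    refine ⟨x j₀ + lam j₀ - lam i, fun j => ?_⟩
    by_cases hx : ∀ k ≠ i, x k ∈ Icc 0 xbar
    · rcases eq_or_ne j i with rfl | hj
      · exact isThresholdSet_update_laguerre_self hx hj₀ fun k hk => hmax ⟨k, hk⟩
      · exact isThresholdSet_update_laguerre_of_ne hx hj₀ (fun k hk => hmax ⟨k, hk⟩) hj
    · convert isThresholdSet_empty using 1
      exact eq_empty_of_forall_notMem fun t ht => hx (forall_mem_Icc_of_update_mem_laguerre ht)
  · push Not at hrival
    refine ⟨0, fun j => ?_⟩
    convert isThresholdSet_self (c := (0 : ℝ)) using 1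
    ext t
    rw [hrival j, mem_ofPred_eq, update_mem_laguerre_self_iff]
    simp [hrival]

lemma measurableSet_laguerre (xbar : ℝ) (lam : Fin n → ℝ) (j : Fin n) :
    MeasurableSet (laguerre xbar lam j) := by
  simp only [laguerre, ofPred_and, ofPred_forall]
  exact (MeasurableSet.iInter fun k => measurableSet_Icc.preimage (measurable_pi_apply k)).inter
    (MeasurableSet.iInter fun k => MeasurableSet.iInter fun _ =>
      measurableSet_lt (by fun_prop) (by fun_prop))

lemma pairwise_disjoint_laguerre (xbar : ℝ) (lam : Fin n → ℝ) :
    Pairwise (Disjoint on laguerre xbar lam) := fun j k hjk =>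
  disjoint_left.mpr fun _ hj hk => (hj.2 k hjk.symm).asymm (hk.2 j hjk)

lemma sum_pAlloc_eq_measureReal_biUnion (μ : Measure (Fin n → ℝ)) [IsFiniteMeasure μ]
    (S : Finset (Fin n)) :
    ∑ j ∈ S, pAlloc xbar μ lam j = μ.real (⋃ j ∈ S, laguerre xbar lam j) :=
  (measureReal_biUnion_finset (fun _ _ _ _ hjk => pairwise_disjoint_laguerre xbar lam hjk)
    fun j _ => measurableSet_laguerre xbar lam j).symm

lemma measure_pi_setOf_add_eq_add_eq_zero {ι : Type*} [Fintype ι] [DecidableEq ι]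
    (μ : ι → Measure ℝ) [∀ j, SigmaFinite (μ j)] {j k : ι} [NullSingletonClass (μ j)]
    (hjk : j ≠ k) (a b : ℝ) :
    Measure.pi μ {x | x j + a = x k + b} = 0 := by
  refine measure_pi_eq_zero_of_measure_update μ j (measurableSet_eq_fun (by fun_prop) (by fun_prop))
    fun x => measure_mono_null (fun t ht => ?_) (measure_singleton (x k + b - a))
  simp only [mem_ofPred_eq, update_self, update_of_ne hjk.symm] at ht
  rw [mem_singleton_iff]
  linarith

lemma ae_mem_iUnion_laguerre [Nonempty (Fin n)] (μ : Fin n → Measure ℝ)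
    [∀ j, IsProbabilityMeasure (μ j)] [∀ j, NullSingletonClass (μ j)]
    (hK : ∀ j, μ j (Icc 0 xbar) = 1) :
    ∀ᵐ x ∂Measure.pi μ, x ∈ ⋃ j, laguerre xbar lam j := by
  have hcube : ∀ᵐ x ∂Measure.pi μ, ∀ j, x j ∈ Icc 0 xbar := ae_all_iff.mpr fun j =>
    Measure.tendsto_eval_ae_ae.eventually
      ((ae_mem_iff_measure_eq measurableSet_Icc.nullMeasurableSet).mpr (by rw [hK, measure_univ]))
  have hnotie : ∀ᵐ x ∂Measure.pi μ, ∀ j k, j ≠ k → x j + lam j ≠ x k + lam k :=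
    ae_all_iff.mpr fun j => ae_all_iff.mpr fun k => ae_iff.mpr <| by
      by_cases hjk : j = k
      · simp [hjk]
      · simpa [hjk] using measure_pi_setOf_add_eq_add_eq_zero μ hjk (lam j) (lam k)
  filter_upwards [hcube, hnotie] with x hx hne
  obtain ⟨j₀, hj₀⟩ := Finite.exists_max fun j => x j + lam j
  exact mem_iUnion.mpr ⟨j₀, hx, fun k hk => (hj₀ k).lt_of_ne (hne k j₀ hk)⟩

lemma sum_pAlloc_pi_eq_one [Nonempty (Fin n)] {μ : Fin n → Measure ℝ}
    [∀ j, IsProbabilityMeasure (μ j)] [∀ j, NullSingletonClass (μ j)]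
    (hK : ∀ j, μ j (Icc 0 xbar) = 1) :
    ∑ j, pAlloc xbar (Measure.pi μ) lam j = 1 := by
  have hU : MeasurableSet (⋃ j, laguerre xbar lam j) :=
    MeasurableSet.iUnion (measurableSet_laguerre xbar lam)
  have hsum := sum_pAlloc_eq_measureReal_biUnion (xbar := xbar) (lam := lam) (Measure.pi μ)
    Finset.univ
  simp only [Finset.mem_univ, iUnion_true] at hsum
  rw [hsum, measureReal_def, (prob_compl_eq_zero_iff hU).mp (mem_ae_iff.mp
    (ae_mem_iUnion_laguerre μ hK)), ENNReal.toReal_one]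

lemma measureReal_pi_biUnion_laguerre_le {μ ν : Fin n → Measure ℝ}
    [∀ j, IsProbabilityMeasure (μ j)] [∀ j, IsProbabilityMeasure (ν j)]
    [∀ j, NullSingletonClass (μ j)] [∀ j, NullSingletonClass (ν j)] {i : Fin n} {Δ : ℝ}
    (hνμ : ∀ j ≠ i, ν j = μ j) (hμK : μ i (Icc 0 xbar) = 1) (hνK : ν i (Icc 0 xbar) = 1)
    (hclose : ∀ x, |mcdf (μ i) x - mcdf (ν i) x| ≤ Δ) (S : Finset (Fin n)) :
    (Measure.pi μ).real (⋃ j ∈ S, laguerre xbar lam j) ≤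
      (Measure.pi ν).real (⋃ j ∈ S, laguerre xbar lam j) + Δ := by
  have hΔ : 0 ≤ Δ := (abs_nonneg _).trans (hclose 0)
  have hU : MeasurableSet (⋃ j ∈ S, laguerre xbar lam j) :=
    S.measurableSet_biUnion fun j _ => measurableSet_laguerre xbar lam j
  have key := measure_pi_le_add_of_measure_update_le hνμ hU (δ := ENNReal.ofReal Δ) fun x => by
    obtain ⟨c, hc⟩ := exists_isThresholdSet_update_laguerre (xbar := xbar) (lam := lam) i x
    have hsec :
        IsThresholdSet (Icc 0 xbar) c {t | update x i t ∈ ⋃ j ∈ S, laguerre xbar lam j} := by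
      convert IsThresholdSet.biUnion fun j (_ : j ∈ (S : Set (Fin n))) => hc j using 1
      ext t
      simp
    have := measureReal_le_add_of_isThresholdSet measurableSet_Icc hμK hνK
      (measurable_update x hU) hsec (hclose c)
    rw [← ofReal_measureReal, ← ofReal_measureReal, ← ENNReal.ofReal_add measureReal_nonneg hΔ]
    exact ENNReal.ofReal_le_ofReal this
  have := ENNReal.toReal_mono (ENNReal.add_ne_top.mpr ⟨measure_ne_top _ _, ENNReal.ofReal_ne_top⟩)
    key
  rwa [ENNReal.toReal_add (measure_ne_top _ _) ENNReal.ofReal_ne_top,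
    ENNReal.toReal_ofReal hΔ] at this

lemma sum_max_sub_zero_eq_of_sum_eq {ι : Type*} (s : Finset ι) {p q : ι → ℝ}
    (h : ∑ j ∈ s, p j = ∑ j ∈ s, q j) :
    ∑ j ∈ s, max (p j - q j) 0 = ∑ j ∈ s, max (q j - p j) 0 := by
  have := Finset.sum_congr rfl fun j (_ : j ∈ s) => max_zero_sub_max_neg_zero_eq_self (p j - q j)
  simp only [neg_sub, Finset.sum_sub_distrib, h, sub_self] at this
  linarith

lemma sum_max_sub_zero_le {ι : Type*} [Fintype ι] {p q : ι → ℝ} {Δ : ℝ}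
    (h : ∀ S : Finset ι, ∑ j ∈ S, p j ≤ ∑ j ∈ S, q j + Δ) :
    ∑ j, max (p j - q j) 0 ≤ Δ := by
  classical
  have hpos : ∑ j, max (p j - q j) 0 =
      ∑ j ∈ Finset.univ.filter (fun j => q j < p j), (p j - q j) := by
    rw [Finset.sum_filter]
    refine Finset.sum_congr rfl fun j _ => ?_
    split_ifs with hj
    · exact max_eq_left (sub_nonneg.mpr hj.le)
    · exact max_eq_right (sub_nonpos.mpr (not_lt.mp hj))
  rw [hpos, Finset.sum_sub_distrib]
  linarith [h (Finset.univ.filter fun j => q j < p j)]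

theorem allocation_size_closeness_single_coordinate_general
    {n : ℕ} (xbar Δ : ℝ)
    (lam : Fin n → ℝ) (i : Fin n)
    (Fm Gm : Fin n → Measure ℝ)
    [∀ j, IsProbabilityMeasure (Fm j)] [∀ j, IsProbabilityMeasure (Gm j)]
    (hGeq : ∀ j, j ≠ i → Gm j = Fm j)
    (hFsupp : ∀ j, Fm j (Set.Icc (0 : ℝ) xbar) = 1)
    (hGisupp : Gm i (Set.Icc (0 : ℝ) xbar) = 1)
    (hFcont : ∀ j, Continuous (mcdf (Fm j)))
    (hGicont : Continuous (mcdf (Gm i)))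
    (hclose : ∀ x, |mcdf (Fm i) x - mcdf (Gm i) x| ≤ Δ) :
    (∑ j, max (pAlloc xbar (Measure.pi Fm) lam j - pAlloc xbar (Measure.pi Gm) lam j) 0 =
        ∑ j, max (pAlloc xbar (Measure.pi Gm) lam j - pAlloc xbar (Measure.pi Fm) lam j) 0) ∧
      ∑ j, max (pAlloc xbar (Measure.pi Fm) lam j - pAlloc xbar (Measure.pi Gm) lam j) 0 ≤
        Δ := by
  have : Nonempty (Fin n) := ⟨i⟩
  have hFatom (j : Fin n) : NullSingletonClass (Fm j) :=
    nullSingletonClass_of_continuous_mcdf (hFcont j)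
  have hGatom (j : Fin n) : NullSingletonClass (Gm j) := by
    by_cases hj : j = i
    · subst hj; exact nullSingletonClass_of_continuous_mcdf hGicont
    · rw [hGeq j hj]; exact hFatom j
  have hGsupp (j : Fin n) : Gm j (Icc 0 xbar) = 1 := by
    by_cases hj : j = i
    · subst hj; exact hGisupp
    · rw [hGeq j hj]; exact hFsupp j
  refine ⟨sum_max_sub_zero_eq_of_sum_eq _ ?_, sum_max_sub_zero_le fun S => ?_⟩
  · rw [sum_pAlloc_pi_eq_one hFsupp, sum_pAlloc_pi_eq_one hGsupp]
  · rw [sum_pAlloc_eq_measureReal_biUnion, sum_pAlloc_eq_measureReal_biUnion]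
    exact measureReal_pi_biUnion_laguerre_le hGeq (hFsupp i) hGisupp hclose S

/-- Single-coordinate version: if the product distributions `F = F¹ ⊗ … ⊗ Fⁿ` and `G`
differ only in their `i`-th marginal (`Gᵢ` in place of `Fᵢ`), with continuous marginal CDFs
and `sup_x |Fⁱ(x) − Gⁱ(x)| ≤ Δ`, then for a fixed greedy policy `λ`,
`∑_j (p_j(F,λ) − p_j(G,λ))⁺ = ∑_j (p_j(G,λ) − p_j(F,λ))⁺ ≤ Δ`. -/
theorem allocation_size_closeness_single_coordinate
    {n : ℕ} (xbar Δ : ℝ) (hxbar : 0 < xbar)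
    (lam : Fin n → ℝ) (i : Fin n)
    (Fm Gm : Fin n → Measure ℝ)
    [∀ j, IsProbabilityMeasure (Fm j)] [∀ j, IsProbabilityMeasure (Gm j)]
    (hGeq : ∀ j, j ≠ i → Gm j = Fm j)
    (hFsupp : ∀ j, Fm j (Set.Icc (0 : ℝ) xbar) = 1)
    (hGisupp : Gm i (Set.Icc (0 : ℝ) xbar) = 1)
    (hFcont : ∀ j, Continuous (mcdf (Fm j)))
    (hGicont : Continuous (mcdf (Gm i)))
    (hclose : ∀ x, |mcdf (Fm i) x - mcdf (Gm i) x| ≤ Δ) :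
    (∑ j, max (pAlloc xbar (Measure.pi Fm) lam j - pAlloc xbar (Measure.pi Gm) lam j) 0 =
        ∑ j, max (pAlloc xbar (Measure.pi Gm) lam j - pAlloc xbar (Measure.pi Fm) lam j) 0) ∧
      ∑ j, max (pAlloc xbar (Measure.pi Fm) lam j - pAlloc xbar (Measure.pi Gm) lam j) 0 ≤
        Δ :=
  allocation_size_closeness_single_coordinate_general xbar Δ lam i Fm Gm hGeq hFsupp hGisupp hFcont
    hGicont hclose
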